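/- There exists a constant C₂ > 1 with the following property. For every commutative unital normed ℝ-algebra A with submultiplicative norm, every ℝ-linear derivation D : A → A, every integer N ≥ 3, every real L ≥ 1, and all elements u₁, u₂ ∈ A satisfying ‖Dⁿ uᵢ‖ ≤ L^{n−2}·(n−3)! for all integers 3 ≤ n ≤ N and i ∈ {1,2}, one has ‖Dⁿ(u₁u₂)‖ ≤ C₂·(1 + Σ_{i=1}^{2} Σ_{l=0}^{2} ‖D^l uᵢ‖)²·L^{n−2}·(n−3)! for all integers 3 ≤ n ≤ N. -/

import Mathlib

/-!
By the Leibniz rule, `‖Dⁿ(u₁u₂)‖ ≤ ∑_{i+j=n} C(n,i) ‖Dⁱu₁‖ ‖Dʲu₂‖`. With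
`B = 1 + ∑ᵢ ∑_{l≤2} ‖D^l uᵢ‖`, every factor satisfies `‖Dᵏuᵢ‖ ≤ B L^(k-2) (k-3)!`, also for
`k < 3` (subtraction on `ℕ` truncates, so `(k-3)! = 1` there). So everything reduces to
`∑_{i+j=n} C(n,i) (i-3)! (j-3)! ≤ C (n-3)!`. Since `k!/(k-3)!` lies between `(k+1)³/14` and
`(k+1)³`, and `(i+j+1)³ ≤ 4((i+1)³ + (j+1)³)`, each term is at most
`14² · 4 · (n-3)! ((i+1)⁻³ + (j+1)⁻³)`, and `∑ₖ (k+1)⁻³ ≤ 2`.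
-/

open Finset Nat

theorem iterate_map_mul_eq_sum_antidiagonal {A F : Type*} [NonUnitalNonAssocSemiring A]
    [FunLike F A A] [AddMonoidHomClass F A A] (D : F)
    (hD : ∀ x y, D (x * y) = x * D y + D x * y) (x y : A) (n : ℕ) :
    D^[n] (x * y) = ∑ ij ∈ antidiagonal n, n.choose ij.1 • (D^[ij.1] x * D^[ij.2] y) := by
  induction n with
  | zero => simp
  | succ n ih =>
    rw [Function.iterate_succ_apply', ih, map_sum,
      sum_antidiagonal_choose_succ_nsmul (fun i j => D^[i] x * D^[j] y)]
    simp only [map_nsmul, hD, smul_add, sum_add_distrib, Function.iterate_succ_apply']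
    congr 1
    refine sum_congr rfl fun ij hij => ?_
    rw [Nat.choose_symm_of_eq_add (HasAntidiagonal.mem_antidiagonal.mp hij).symm]

theorem norm_iterate_map_mul_le {A F : Type*} [NonUnitalSeminormedRing A]
    [FunLike F A A] [AddMonoidHomClass F A A] (D : F)
    (hD : ∀ x y, D (x * y) = x * D y + D x * y) (x y : A) (n : ℕ) :
    ‖D^[n] (x * y)‖ ≤
      ∑ ij ∈ antidiagonal n, n.choose ij.1 * (‖D^[ij.1] x‖ * ‖D^[ij.2] y‖) := by
  rw [iterate_map_mul_eq_sum_antidiagonal D hD]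
  refine (norm_sum_le _ _).trans (sum_le_sum fun ij _ => ?_)
  exact norm_nsmul_le.trans (by gcongr; exact norm_mul_le _ _)

theorem succ_pow_three_mul_factorial_sub_three_le (k : ℕ) :
    (k + 1) ^ 3 * (k - 3)! ≤ 14 * k ! := by
  rcases lt_or_ge k 3 with hk | hk
  · interval_cases k <;> decide
  · obtain ⟨m, rfl⟩ := Nat.exists_eq_add_of_le' hk
    rw [Nat.add_sub_cancel, Nat.factorial_succ, Nat.factorial_succ, Nat.factorial_succ]
    have hcubic : (m + 3 + 1) ^ 3 ≤ 14 * ((m + 2 + 1) * ((m + 1 + 1) * (m + 1))) := by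
      ring_nf; nlinarith [Nat.zero_le (m ^ 3), Nat.zero_le (m ^ 2)]
    calc _ ≤ 14 * ((m + 2 + 1) * ((m + 1 + 1) * (m + 1))) * m ! := by gcongr
      _ = _ := by ring

theorem factorial_le_succ_pow_three_mul_factorial_sub_three (k : ℕ) :
    k ! ≤ (k + 1) ^ 3 * (k - 3)! := by
  rcases lt_or_ge k 3 with hk | hk
  · interval_cases k <;> decide
  · rw [← Nat.factorial_mul_descFactorial hk, mul_comm]
    gcongr
    exact (Nat.descFactorial_le_pow k 3).trans (Nat.pow_le_pow_left k.le_succ 3)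

theorem choose_mul_factorial_sub_three_mul_factorial_sub_three_le (i j : ℕ) :
    (i + 1) ^ 3 * (j + 1) ^ 3 * ((i + j).choose i * (i - 3)! * (j - 3)!) ≤
      784 * ((i + 1) ^ 3 + (j + 1) ^ 3) * (i + j - 3)! := by
  have hsucc : (i + j + 1) ^ 3 ≤ 4 * ((i + 1) ^ 3 + (j + 1) ^ 3) :=
    calc (i + j + 1) ^ 3 ≤ ((i + 1) + (j + 1)) ^ 3 := Nat.pow_le_pow_left (by omega) 3
      _ ≤ _ := add_pow_le (zero_le _) (zero_le _) 3
  calc (i + 1) ^ 3 * (j + 1) ^ 3 * ((i + j).choose i * (i - 3)! * (j - 3)!)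
      = (i + j).choose i * ((i + 1) ^ 3 * (i - 3)!) * ((j + 1) ^ 3 * (j - 3)!) := by ring
    _ ≤ (i + j).choose i * (14 * i !) * (14 * j !) :=
      Nat.mul_le_mul (Nat.mul_le_mul_left _ (succ_pow_three_mul_factorial_sub_three_le i))
        (succ_pow_three_mul_factorial_sub_three_le j)
    _ = 196 * (i + j)! := by
      rw [← Nat.add_choose_mul_factorial_mul_factorial, Nat.choose_symm_add]; ring
    _ ≤ 196 * ((i + j + 1) ^ 3 * (i + j - 3)!) := by
      gcongr; exact factorial_le_succ_pow_three_mul_factorial_sub_three _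
    _ ≤ 196 * (4 * ((i + 1) ^ 3 + (j + 1) ^ 3) * (i + j - 3)!) := by gcongr
    _ = _ := by ring

theorem sum_range_inv_succ_pow_three_le_two (m : ℕ) :
    ∑ k ∈ range m, (((k : ℝ) + 1) ^ 3)⁻¹ ≤ 2 := by
  calc ∑ k ∈ range m, (((k : ℝ) + 1) ^ 3)⁻¹
      ≤ ∑ k ∈ range m, (((k + 1 : ℕ) : ℝ) ^ 2)⁻¹ := by
        gcongr with k
        push_cast
        exact pow_le_pow_right₀ (by linarith [k.cast_nonneg (α := ℝ)]) (by norm_num)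
    _ = ∑ i ∈ Ioo 0 (m + 1), ((i : ℝ) ^ 2)⁻¹ := by
        rw [range_eq_Ico, sum_Ico_add' (fun i : ℕ => ((i : ℝ) ^ 2)⁻¹),
          Finset.Ico_add_one_left_eq_Ioo]
    _ ≤ 2 := by simpa using sum_Ioo_inv_sq_le (α := ℝ) 0 (m + 1)

theorem sum_antidiagonal_choose_mul_factorial_sub_three_le (n : ℕ) :
    ∑ ij ∈ antidiagonal n, (n.choose ij.1 * (ij.1 - 3)! * (ij.2 - 3)! : ℝ) ≤
      3136 * (n - 3)! := by
  set w : ℕ → ℝ := fun k => (((k : ℝ) + 1) ^ 3)⁻¹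
  have hterm : ∀ ij ∈ antidiagonal n,
      (n.choose ij.1 * (ij.1 - 3)! * (ij.2 - 3)! : ℝ) ≤ 784 * (n - 3)! * (w ij.1 + w ij.2) := by
    rintro ⟨i, j⟩ hij
    rw [HasAntidiagonal.mem_antidiagonal] at hij
    subst hij
    have hnat : ((i + 1) ^ 3 * (j + 1) ^ 3 * ((i + j).choose i * (i - 3)! * (j - 3)!) : ℝ) ≤
        784 * ((i + 1) ^ 3 + (j + 1) ^ 3) * (i + j - 3)! := by
      exact_mod_cast choose_mul_factorial_sub_three_mul_factorial_sub_three_le i j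
    have hi : (0 : ℝ) < ((i : ℝ) + 1) ^ 3 := by positivity
    have hj : (0 : ℝ) < ((j : ℝ) + 1) ^ 3 := by positivity
    simp only [w]
    rw [inv_add_inv hi.ne' hj.ne', ← mul_div_assoc, le_div_iff₀ (by positivity)]
    linarith
  have hsum₁ : ∑ ij ∈ antidiagonal n, w ij.1 ≤ 2 := by
    rw [Nat.sum_antidiagonal_eq_sum_range_succ_mk]
    exact sum_range_inv_succ_pow_three_le_two _
  have hsum₂ : ∑ ij ∈ antidiagonal n, w ij.2 ≤ 2 := by
    rw [← Nat.sum_antidiagonal_swap]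
    exact hsum₁
  calc ∑ ij ∈ antidiagonal n, (n.choose ij.1 * (ij.1 - 3)! * (ij.2 - 3)! : ℝ)
      ≤ ∑ ij ∈ antidiagonal n, 784 * (n - 3)! * (w ij.1 + w ij.2) := sum_le_sum hterm
    _ = 784 * (n - 3)! * (∑ ij ∈ antidiagonal n, w ij.1 + ∑ ij ∈ antidiagonal n, w ij.2) := by
      rw [← mul_sum, sum_add_distrib]
    _ ≤ 784 * (n - 3)! * (2 + 2) := by gcongr
    _ = 3136 * (n - 3)! := by ring

theorem le_mul_pow_mul_factorial_of_le {a : ℕ → ℝ} {N : ℕ} {L B : ℝ} (hL : 1 ≤ L)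
    (ha : ∀ k, 0 ≤ a k) (hB : 1 ≤ B) (hsmall : ∑ l ∈ range 3, a l ≤ B)
    (hlarge : ∀ k, 3 ≤ k → k ≤ N → a k ≤ L ^ (k - 2) * (k - 3)!) (k : ℕ) (hk : k ≤ N) :
    a k ≤ B * L ^ (k - 2) * (k - 3)! := by
  rcases lt_or_ge k 3 with hk3 | hk3
  · rw [Nat.sub_eq_zero_of_le (by omega : k ≤ 2), Nat.sub_eq_zero_of_le hk3.le]
    simpa using (single_le_sum (fun l _ => ha l) (mem_range.mpr hk3)).trans hsmall
  · calc a k ≤ L ^ (k - 2) * (k - 3)! := hlarge k hk3 hk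
      _ ≤ B * (L ^ (k - 2) * (k - 3)!) := le_mul_of_one_le_left (by positivity) hB
      _ = B * L ^ (k - 2) * (k - 3)! := by ring

theorem norm_iterate_map_mul_le_of_le {A F : Type*} [NonUnitalSeminormedRing A]
    [FunLike F A A] [AddMonoidHomClass F A A] (D : F)
    (hD : ∀ x y, D (x * y) = x * D y + D x * y) {L B : ℝ} (hL : 1 ≤ L) (hB : 0 ≤ B)
    {x y : A} {n : ℕ}
    (hx : ∀ k ≤ n, ‖D^[k] x‖ ≤ B * L ^ (k - 2) * (k - 3)!)
    (hy : ∀ k ≤ n, ‖D^[k] y‖ ≤ B * L ^ (k - 2) * (k - 3)!) :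
    ‖D^[n] (x * y)‖ ≤ 3136 * B ^ 2 * L ^ (n - 2) * (n - 3)! := by
  have hterm : ∀ ij ∈ antidiagonal n, n.choose ij.1 * (‖D^[ij.1] x‖ * ‖D^[ij.2] y‖) ≤
      B ^ 2 * L ^ (n - 2) * (n.choose ij.1 * (ij.1 - 3)! * (ij.2 - 3)!) := by
    rintro ⟨i, j⟩ hij
    rw [HasAntidiagonal.mem_antidiagonal] at hij
    calc n.choose i * (‖D^[i] x‖ * ‖D^[j] y‖)
        ≤ n.choose i * ((B * L ^ (i - 2) * (i - 3)!) * (B * L ^ (j - 2) * (j - 3)!)) := by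
          gcongr
          exacts [hx i (by omega), hy j (by omega)]
      _ = B ^ 2 * L ^ ((i - 2) + (j - 2)) * (n.choose i * (i - 3)! * (j - 3)!) := by ring
      _ ≤ B ^ 2 * L ^ (n - 2) * (n.choose i * (i - 3)! * (j - 3)!) := by
          gcongr
          omega
  calc ‖D^[n] (x * y)‖
      ≤ ∑ ij ∈ antidiagonal n, n.choose ij.1 * (‖D^[ij.1] x‖ * ‖D^[ij.2] y‖) :=
        norm_iterate_map_mul_le D hD x y n
    _ ≤ B ^ 2 * L ^ (n - 2) *
          ∑ ij ∈ antidiagonal n, (n.choose ij.1 * (ij.1 - 3)! * (ij.2 - 3)! : ℝ) := by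
        rw [mul_sum]; exact sum_le_sum hterm
    _ ≤ B ^ 2 * L ^ (n - 2) * (3136 * (n - 3)!) := by
        gcongr; exact sum_antidiagonal_choose_mul_factorial_sub_three_le n
    _ = 3136 * B ^ 2 * L ^ (n - 2) * (n - 3)! := by ring

/-- Lemma 2.2 (iii). There is a universal constant `C₂ > 1` such that
for any commutative unital normed `ℝ`-algebra `A` (with submultiplicative norm), any
`ℝ`-linear derivation `D : A → A`, any `N ≥ 3`, `L ≥ 1`, and `u₁, u₂ ∈ A` with
`‖Dⁿ uᵢ‖ ≤ L^(n-2) (n-3)!` for `3 ≤ n ≤ N`, one has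
`‖Dⁿ(u₁u₂)‖ ≤ C₂ (1 + Σᵢ Σ_{l≤2} ‖D^l uᵢ‖)² L^(n-2) (n-3)!` for `3 ≤ n ≤ N`. -/
theorem derivation_product_estimate_two' :
    ∃ C₂ : ℝ, 1 < C₂ ∧
      ∀ (A : Type) [NormedCommRing A] [NormedAlgebra ℝ A] (D : A →ₗ[ℝ] A),
        (∀ x y : A, D (x * y) = x * D y + D x * y) →
        ∀ (N : ℕ), 3 ≤ N → ∀ (L : ℝ), 1 ≤ L → ∀ u₁ u₂ : A,
          (∀ n : ℕ, 3 ≤ n → n ≤ N →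
            ‖(⇑D)^[n] u₁‖ ≤ L ^ (n - 2) * (n - 3).factorial) →
          (∀ n : ℕ, 3 ≤ n → n ≤ N →
            ‖(⇑D)^[n] u₂‖ ≤ L ^ (n - 2) * (n - 3).factorial) →
          ∀ n : ℕ, 3 ≤ n → n ≤ N →
            ‖(⇑D)^[n] (u₁ * u₂)‖ ≤
              C₂ * (1 + (∑ l ∈ Finset.range 3, ‖(⇑D)^[l] u₁‖ +
                  ∑ l ∈ Finset.range 3, ‖(⇑D)^[l] u₂‖)) ^ 2 *
                L ^ (n - 2) * (n - 3).factorial := by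
  refine ⟨3136, by norm_num, ?_⟩
  intro A _ _ D hD N _ L hL u₁ u₂ h₁ h₂ n _ hnN
  set S₁ := ∑ l ∈ range 3, ‖D^[l] u₁‖
  set S₂ := ∑ l ∈ range 3, ‖D^[l] u₂‖
  have hS₁ : 0 ≤ S₁ := sum_nonneg fun _ _ => norm_nonneg _
  have hS₂ : 0 ≤ S₂ := sum_nonneg fun _ _ => norm_nonneg _
  have hB : 1 ≤ 1 + (S₁ + S₂) := by linarith
  have hu₁ := le_mul_pow_mul_factorial_of_le hL (fun _ => norm_nonneg _) hB (by linarith) h₁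
  have hu₂ := le_mul_pow_mul_factorial_of_le hL (fun _ => norm_nonneg _) hB (by linarith) h₂
  exact norm_iterate_map_mul_le_of_le D hD hL (by linarith)
    (fun k hk => hu₁ k (hk.trans hnN)) (fun k hk => hu₂ k (hk.trans hnN))
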